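/- arXiv:1104.4006 — 2 statements merged into one kernel-verified Lean document; each statement's English description precedes it below -/
import Mathlib

section
/- Let A be an artin algebra with radical square zero that has no simple projective modules (e.g., A is cyclic-like). Then every simple A-module has infinite projective dimension. -/
/-!
Over an artinian ring `A` with Jacobson radical `J`, a simple module `T` has a projective cover
`Ae → T` whose kernel lies in `J` (lift to `A` an idempotent of the semisimple ring `A/J`
generating a complement of the maximal left ideal `ann t`). When `J² = 0` that kernel is
annihilated by `J`, i.e. the syzygy of a simple module is semisimple, and it is nonzero when `T`
is not projective. By Schanuel's lemma a syzygy of a module with a projective resolution of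
length `≤ n + 1` has one of length `≤ n`, and so does every direct summand of a module with a
resolution of length `≤ n`. Hence, descending from a nonzero semisimple module through a simple
summand to its syzygy lowers the length by one at each step, which is impossible once the length
reaches `0`, because no simple module is projective.
-/

open CategoryTheory

/-- The Jacobson radical of a ring, as a left ideal. -/
abbrev ringRadical (A : Type) [Ring A] : Ideal A := (⊥ : Ideal A).jacobson

/-- `A` has radical square zero. -/
def RadicalSquareZero (A : Type) [Ring A] : Prop :=
  ∀ a ∈ ringRadical A, ∀ b ∈ ringRadical A, a * b = 0

/-- A finitely generated module `S` has finite projective dimension: it admits a finite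
resolution `0 → P_n → ⋯ → P_1 → P_0 → S → 0` by finitely generated projective
modules. -/
def HasFiniteProjectiveDimension (A : Type) [Ring A] (S : ModuleCat.{0} A) : Prop :=
  ∃ (n : ℕ) (P : ℕ → ModuleCat.{0} A) (d : ∀ i : ℕ, P (i + 1) ⟶ P i) (ε : P 0 ⟶ S),
    (∀ i, Module.Projective A (P i)) ∧ (∀ i, Module.Finite A (P i)) ∧
    Function.Surjective ε ∧ Function.Exact (d 0) ε ∧
    (∀ i, Function.Exact (d (i + 1)) (d i)) ∧
    (∀ i, n < i → Limits.IsZero (P i))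

section Schanuel

variable {A K M N P Q : Type*} [Ring A] [AddCommGroup K] [Module A K] [AddCommGroup M] [Module A M]
  [AddCommGroup N] [Module A N] [AddCommGroup P] [Module A P] [AddCommGroup Q] [Module A Q]

theorem Function.Exact.nonempty_linearEquiv_prod [Module.Projective A P] {f : K →ₗ[A] N}
    {g : N →ₗ[A] P} (h : Function.Exact f g) (hf : Function.Injective f)
    (hg : Function.Surjective g) : Nonempty (N ≃ₗ[A] K × P) :=
  have ⟨l, hl⟩ := Module.projective_lifting_property g LinearMap.id hg
  ⟨(h.splitSurjectiveEquiv hf ⟨l, hl⟩).1⟩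

theorem LinearMap.nonempty_ker_coprod_equiv [Module.Projective A P] (ε : P →ₗ[A] M)
    {f : Q →ₗ[A] M} (hf : Function.Surjective f) :
    Nonempty (ker (ε.coprod f) ≃ₗ[A] ker f × P) := by
  let ι : ker f →ₗ[A] ker (ε.coprod f) :=
    (inr A P Q ∘ₗ (ker f).subtype).codRestrict _ fun q ↦ by simp
  let π : ker (ε.coprod f) →ₗ[A] P := fst A P Q ∘ₗ (ker (ε.coprod f)).subtype
  refine Function.Exact.nonempty_linearEquiv_prod (f := ι) (g := π) ?_ ?_ ?_
  · rintro ⟨⟨p, q⟩, hpq⟩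
    simp only [π, coe_comp, Function.comp_apply, Submodule.coe_subtype, fst_apply]
    constructor
    · rintro rfl
      exact ⟨⟨q, by simpa using hpq⟩, rfl⟩
    · rintro ⟨y, hy⟩
      exact congrArg (fun z : ker (ε.coprod f) ↦ (z : P × Q).1) hy.symm
  · intro x y hxy
    exact Subtype.ext (congrArg (fun z : ker (ε.coprod f) ↦ (z : P × Q).2) hxy)
  · intro p
    obtain ⟨q, hq⟩ := hf (-ε p)
    exact ⟨⟨(p, q), by simp [hq]⟩, rfl⟩

theorem LinearMap.schanuel [Module.Projective A P] [Module.Projective A Q] {ε : P →ₗ[A] M}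
    {f : Q →ₗ[A] M} (hε : Function.Surjective ε) (hf : Function.Surjective f) :
    Nonempty ((ker f × P) ≃ₗ[A] (ker ε × Q)) := by
  obtain ⟨e₁⟩ := nonempty_ker_coprod_equiv ε hf
  obtain ⟨e₂⟩ := nonempty_ker_coprod_equiv f hε
  have hswap : (ker (ε.coprod f)).map (LinearEquiv.prodComm A P Q : P × Q →ₗ[A] Q × P) =
      ker (f.coprod ε) := by
    rw [Submodule.map_equiv_eq_comap_symm, ← ker_comp]
    congr 1
    ext <;> simp
  exact ⟨e₁.symm ≪≫ₗ (LinearEquiv.prodComm A P Q).ofSubmodules _ _ hswap ≪≫ₗ e₂⟩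

def LinearMap.kerProdMapEquiv {M₁ M₂ N₁ N₂ : Type*} [AddCommGroup M₁] [Module A M₁]
    [AddCommGroup M₂] [Module A M₂] [AddCommGroup N₁] [Module A N₁] [AddCommGroup N₂]
    [Module A N₂] (f : M₁ →ₗ[A] N₁) (g : M₂ →ₗ[A] N₂) :
    ker (f.prodMap g) ≃ₗ[A] (ker f × ker g) where
  toFun z := (⟨z.1.1, congrArg Prod.fst z.2⟩, ⟨z.1.2, congrArg Prod.snd z.2⟩)
  invFun w := ⟨(w.1, w.2), Prod.ext w.1.2 w.2.2⟩
  map_add' _ _ := rfl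
  map_smul' _ _ := rfl

end Schanuel

section Resolution

open LinearMap (ker)

variable {A M N Q : Type} [Ring A] [AddCommGroup M] [Module A M] [AddCommGroup N] [Module A N]
  [AddCommGroup Q] [Module A Q]

def HasProjResolutionLE (A : Type) [Ring A] (n : ℕ) (M : Type) [AddCommGroup M]
    [Module A M] : Prop :=
  ∃ (P : ℕ → ModuleCat.{0} A) (d : ∀ i : ℕ, P (i + 1) ⟶ P i) (ε : P 0 ⟶ ModuleCat.of A M),
    (∀ i, Module.Projective A (P i)) ∧ (∀ i, Module.Finite A (P i)) ∧
    Function.Surjective ε ∧ Function.Exact (d 0) ε ∧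
    (∀ i, Function.Exact (d (i + 1)) (d i)) ∧
    (∀ i, n < i → Limits.IsZero (P i))

theorem hasFiniteProjectiveDimension_iff (S : ModuleCat.{0} A) :
    HasFiniteProjectiveDimension A S ↔ ∃ n, HasProjResolutionLE A n S :=
  Iff.rfl

namespace HasProjResolutionLE

theorem of_projective [Module.Projective A M] [Module.Finite A M] :
    HasProjResolutionLE A 0 M := by
  refine ⟨fun | 0 => ModuleCat.of A M | _ + 1 => ModuleCat.of A PUnit, fun _ ↦ 0,
    𝟙 _, ?_, ?_, Function.surjective_id, ?_, ?_, ?_⟩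
  · rintro (_ | _) <;> infer_instance
  · rintro (_ | _) <;> infer_instance
  · intro x
    simp [eq_comm]
  · rintro (_ | _) x <;> simp
  · rintro (_ | i) hi
    · omega
    · exact ModuleCat.isZero_of_subsingleton _

theorem of_linearEquiv {n : ℕ} (h : HasProjResolutionLE A n M) (e : M ≃ₗ[A] N) :
    HasProjResolutionLE A n N := by
  obtain ⟨P, d, ε, hproj, hfin, hsurj, hex₀, hex, hzero⟩ := h
  refine ⟨P, d, ε ≫ ModuleCat.ofHom e.toLinearMap, hproj, hfin, e.surjective.comp hsurj, ?_,
    hex, hzero⟩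
  exact hex₀.comp_injective _ e.injective (map_zero e)

theorem finite {n : ℕ} (h : HasProjResolutionLE A n M) : Module.Finite A M :=
  have ⟨_, _, ε, _, _, hsurj, _⟩ := h
  Module.Finite.of_surjective ε.hom hsurj

theorem projective (h : HasProjResolutionLE A 0 M) : Module.Projective A M := by
  obtain ⟨P, d, ε, hproj, -, hsurj, hex₀, -, hzero⟩ := h
  have : Subsingleton (P 1) := ModuleCat.subsingleton_of_isZero (hzero 1 one_pos)
  have hinj : Function.Injective ε := by
    refine (injective_iff_map_eq_zero ε.hom).2 fun x hx ↦ ?_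
    obtain ⟨y, rfl⟩ := (hex₀ x).1 hx
    rw [Subsingleton.elim y 0, map_zero]
  exact Module.Projective.of_equiv (LinearEquiv.ofBijective ε.hom ⟨hinj, hsurj⟩)

theorem exists_ker_of_succ {n : ℕ} (h : HasProjResolutionLE A (n + 1) M) :
    ∃ (P : ModuleCat.{0} A) (ε : P →ₗ[A] M), Module.Projective A P ∧ Module.Finite A P ∧
      Function.Surjective ε ∧ HasProjResolutionLE A n (ker ε) := by
  obtain ⟨P, d, ε, hproj, hfin, hsurj, hex₀, hex, hzero⟩ := h
  have hd₀ : ∀ x, (d 0).hom x ∈ ker ε.hom := fun x ↦ (hex₀ _).2 ⟨x, rfl⟩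
  refine ⟨P 0, ε.hom, hproj 0, hfin 0, hsurj, fun i ↦ P (i + 1), fun i ↦ d (i + 1),
    ModuleCat.ofHom ((d 0).hom.codRestrict _ hd₀), fun i ↦ hproj _, fun i ↦ hfin _, ?_,
    fun y ↦ Submodule.coe_eq_zero.symm.trans (hex 0 y), fun i ↦ hex _,
    fun i hi ↦ hzero _ (by omega)⟩
  rintro ⟨y, hy⟩
  obtain ⟨x, rfl⟩ := (hex₀ y).1 hy
  exact ⟨x, rfl⟩

theorem succ_of_surjective [Module.Projective A Q] [Module.Finite A Q] {n : ℕ}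
    (f : Q →ₗ[A] M) (hf : Function.Surjective f) (h : HasProjResolutionLE A n (ker f)) :
    HasProjResolutionLE A (n + 1) M := by
  obtain ⟨P, d, ε, hproj, hfin, hsurj, hex₀, hex, hzero⟩ := h
  refine ⟨fun | 0 => ModuleCat.of A Q | i + 1 => P i,
    fun | 0 => ε ≫ ModuleCat.ofHom (ker f).subtype | i + 1 => d i,
    ModuleCat.ofHom f, ?_, ?_, hf, ?_, ?_, ?_⟩
  · rintro (_ | i)
    · assumption
    · exact hproj i
  · rintro (_ | i)
    · assumption
    · exact hfin i
  · intro y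
    refine ⟨fun hy ↦ ?_, ?_⟩
    · obtain ⟨x, hx⟩ := hsurj ⟨y, hy⟩
      exact ⟨x, congrArg Subtype.val hx⟩
    · rintro ⟨x, rfl⟩
      exact (ε x).2
  · rintro (_ | i)
    · exact hex₀.comp_injective _ Subtype.val_injective rfl
    · exact hex i
  · rintro (_ | i) hi
    · omega
    · exact hzero i (by omega)

theorem prod_of_projective [Module.Projective A Q] [Module.Finite A Q] {n : ℕ}
    (h : HasProjResolutionLE A n M) : HasProjResolutionLE A n (M × Q) := by
  obtain ⟨P, d, ε, hproj, hfin, hsurj, hex₀, hex, hzero⟩ := h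
  refine ⟨fun | 0 => ModuleCat.of A (P 0 × Q) | i + 1 => P (i + 1),
    fun | 0 => d 0 ≫ ModuleCat.ofHom (LinearMap.inl A (P 0) Q) | i + 1 => d (i + 1),
    ModuleCat.ofHom (ε.hom.prodMap LinearMap.id), ?_, ?_, ?_, ?_, ?_, ?_⟩
  · rintro (_ | i)
    · have := hproj 0
      exact inferInstanceAs (Module.Projective A (P 0 × Q))
    · exact hproj _
  · rintro (_ | i)
    · have := hfin 0
      exact inferInstanceAs (Module.Finite A (P 0 × Q))
    · exact hfin _
  · exact hsurj.prodMap Function.surjective_id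
  · rintro ⟨p, q⟩
    simp [Prod.ext_iff, hex₀ p, eq_comm (a := (0 : Q))]
  · rintro (_ | i)
    · exact (hex 0).comp_injective _ LinearMap.inl_injective rfl
    · exact hex _
  · rintro (_ | i) hi
    · omega
    · exact hzero _ hi

theorem exists_prod_ker_of_surjective [Module.Projective A Q] [Module.Finite A Q] {n : ℕ}
    (h : HasProjResolutionLE A (n + 1) M) {f : Q →ₗ[A] M} (hf : Function.Surjective f) :
    ∃ P : ModuleCat.{0} A, HasProjResolutionLE A n (ker f × P) := by
  obtain ⟨P, ε, _, _, hε, hker⟩ := h.exists_ker_of_succ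
  obtain ⟨e⟩ := LinearMap.schanuel hε hf
  exact ⟨P, hker.prod_of_projective.of_linearEquiv e.symm⟩

theorem of_prod_left {n : ℕ} (h : HasProjResolutionLE A n (M × N)) :
    HasProjResolutionLE A n M := by
  induction n generalizing M N with
  | zero =>
    have := h.projective
    have := h.finite
    have : Module.Projective A M :=
      .of_split (LinearMap.inl A M N) (LinearMap.fst A M N) (LinearMap.fst_comp_inl A M N)
    have : Module.Finite A M := .of_surjective (LinearMap.fst A M N) Prod.fst_surjective
    exact of_projective
  | succ n ih =>
    have := h.finite
    have : Module.Finite A M := .of_surjective (LinearMap.fst A M N) Prod.fst_surjective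
    have : Module.Finite A N := .of_surjective (LinearMap.snd A M N) Prod.snd_surjective
    obtain ⟨k, gM, hgM⟩ := Module.Finite.exists_fin' A M
    obtain ⟨l, gN, hgN⟩ := Module.Finite.exists_fin' A N
    obtain ⟨P, hP⟩ := h.exists_prod_ker_of_surjective (f := gM.prodMap gN) (hgM.prodMap hgN)
    have hM : HasProjResolutionLE A n (ker gM × (ker gN × P)) :=
      hP.of_linearEquiv ((LinearMap.kerProdMapEquiv gM gN).prodCongr (.refl A P) ≪≫ₗ
        LinearEquiv.prodAssoc A _ _ _)
    exact succ_of_surjective gM hgM (ih hM)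

theorem ker_of_surjective [Module.Projective A Q] [Module.Finite A Q] {n : ℕ}
    (h : HasProjResolutionLE A (n + 1) M) {f : Q →ₗ[A] M} (hf : Function.Surjective f) :
    HasProjResolutionLE A n (ker f) :=
  have ⟨_, hP⟩ := h.exists_prod_ker_of_surjective hf
  hP.of_prod_left

theorem exists_isSimpleModule [IsSemisimpleModule A M] [Nontrivial M] {n : ℕ}
    (h : HasProjResolutionLE A n M) :
    ∃ T : Submodule A M, IsSimpleModule A T ∧ HasProjResolutionLE A n T := by
  obtain ⟨T, hT⟩ := IsSemisimpleModule.exists_simple_submodule A M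
  obtain ⟨C, hC⟩ := exists_isCompl T
  exact ⟨T, hT, (h.of_linearEquiv (Submodule.prodEquivOfIsCompl T C hC).symm).of_prod_left⟩

end HasProjResolutionLE

end Resolution

section Semiprimary

variable {A : Type*} [Ring A] [IsSemiprimaryRing A]

theorem Ring.isNilpotent_of_mem_jacobson {x : A} (hx : x ∈ Ring.jacobson A) : IsNilpotent x :=
  have ⟨n, hn⟩ := IsSemiprimaryRing.isNilpotent (R := A)
  ⟨n, by simpa [hn] using Ideal.pow_mem_pow hx n⟩

theorem Ideal.exists_isIdempotentElem_notMem_mul_mem_jacobson {m : Ideal A}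
    (hJ : Ring.jacobson A ≤ m) (hm : m ≠ ⊤) :
    ∃ e : A, IsIdempotentElem e ∧ e ∉ m ∧ ∀ a, a * e ∈ m → a * e ∈ Ring.jacobson A := by
  let π := Ideal.Quotient.mk (Ring.jacobson A)
  obtain ⟨f, hf, hmf⟩ := IsSemisimpleRing.ideal_eq_span_idempotent (m.map π)
  obtain ⟨e, he, hπe⟩ := exists_isIdempotentElem_eq_of_ker_isNilpotent π
    (fun x hx ↦ Ring.isNilpotent_of_mem_jacobson (Ideal.mk_ker.le hx)) (1 - f)
    (Ideal.Quotient.mk_surjective _) hf.one_sub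
  refine ⟨e, he, fun hem ↦ hm ?_, fun a ha ↦ ?_⟩
  · have hf_mem : π (1 - e) ∈ m.map π := by
      rw [map_sub, map_one, hπe, sub_sub_cancel, hmf]
      exact Ideal.mem_span_singleton_self f
    obtain ⟨x, hx, hxe⟩ :=
      (Ideal.mem_map_iff_of_surjective π Ideal.Quotient.mk_surjective).1 hf_mem
    have h1e : 1 - e ∈ m := by
      simpa using m.sub_mem hx (hJ (Ideal.Quotient.eq.1 hxe))
    exact (Ideal.eq_top_iff_one m).2 (by simpa using m.add_mem h1e hem)
  · -- `m.map π` is the left ideal generated by `f`, killed by right multiplication with `1 - f`.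
    obtain ⟨b, hb⟩ := Ideal.mem_span_singleton'.1 (hmf ▸ Ideal.mem_map_of_mem π ha)
    rw [← Ideal.Quotient.eq_zero_iff_mem]
    calc π (a * e) = π (a * e) * (1 - f) := by rw [map_mul, hπe, mul_assoc, hf.one_sub.eq]
      _ = 0 := by rw [← hb, mul_assoc, mul_sub, mul_one, hf.eq, sub_self, mul_zero]

theorem IsSimpleModule.exists_projective_cover (T : Type*) [AddCommGroup T] [Module A T]
    [IsSimpleModule A T] :
    ∃ (P : Submodule A A) (π : P →ₗ[A] T), Module.Projective A P ∧ Module.Finite A P ∧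
      Function.Surjective π ∧ ∀ x ∈ LinearMap.ker π, (x : A) ∈ Ring.jacobson A := by
  have := IsSimpleModule.nontrivial A T
  obtain ⟨t, ht⟩ := exists_ne (0 : T)
  let ψ := LinearMap.toSpanSingleton A T t
  have hψ : LinearMap.ker ψ ≠ ⊤ := fun h ↦
    ht (by simpa [ψ] using h.ge (Submodule.mem_top (x := 1)))
  obtain ⟨e, he, hem, hker⟩ := Ideal.exists_isIdempotentElem_notMem_mul_mem_jacobson
    (IsSemisimpleModule.jacobson_le_ker A A A T ψ) hψ
  let P := A ∙ e
  have hP : ∀ x ∈ P, x * e = x := by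
    intro x hx
    obtain ⟨a, rfl⟩ := Submodule.mem_span_singleton.1 hx
    rw [smul_eq_mul, mul_assoc, he.eq]
  refine ⟨P, ψ ∘ₗ P.subtype, ?_, inferInstance, ?_, ?_⟩
  · refine .of_split P.subtype ((LinearMap.toSpanSingleton A A e).codRestrict P
      fun a ↦ Submodule.mem_span_singleton.2 ⟨a, rfl⟩) ?_
    ext ⟨x, hx⟩
    exact hP x hx
  · refine (ψ ∘ₗ P.subtype).surjective_or_eq_zero.resolve_right fun h ↦ hem ?_
    exact LinearMap.congr_fun h ⟨e, Submodule.mem_span_singleton_self e⟩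
  · rintro ⟨x, hxP⟩ (hx : x ∈ LinearMap.ker ψ)
    show x ∈ Ring.jacobson A
    rw [← hP x hxP] at hx ⊢
    exact hker x hx

theorem Module.IsTorsionBySet.isSemisimpleModule_of_jacobson {V : Type*} [AddCommGroup V]
    [Module A V] (hV : Module.IsTorsionBySet A V (Ring.jacobson A)) : IsSemisimpleModule A V :=
  letI := hV.module
  hV.isSemisimpleModule_iff.1 inferInstance

end Semiprimary

namespace RadicalSquareZero

open LinearMap (ker)

variable {A : Type} [Ring A] [IsSemiprimaryRing A]

theorem exists_isTorsionBySet_jacobson_hasProjResolutionLE (hrad : RadicalSquareZero A)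
    {T : Type} [AddCommGroup T] [Module A T] [IsSimpleModule A T]
    (hT : ¬ Module.Projective A T) {n : ℕ} (h : HasProjResolutionLE A (n + 1) T) :
    ∃ W : ModuleCat.{0} A, Nontrivial W ∧ Module.IsTorsionBySet A W (Ring.jacobson A) ∧
      HasProjResolutionLE A n W := by
  obtain ⟨P, π, _, _, hπ, hker⟩ := IsSimpleModule.exists_projective_cover (A := A) T
  have : Nontrivial (ker π) := by
    refine Submodule.nontrivial_iff_ne_bot.2 fun h ↦ hT ?_
    exact .of_equiv (LinearEquiv.ofBijective π ⟨LinearMap.ker_eq_bot.1 h, hπ⟩)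
  refine ⟨.of A (ker π), this, fun x a ↦ ?_, h.ker_of_surjective hπ⟩
  rw [RadicalSquareZero, ringRadical, Ideal.jacobson_bot] at hrad
  ext
  exact hrad a a.2 _ (hker x x.2)

theorem not_hasProjResolutionLE (hrad : RadicalSquareZero A)
    (hnsp : ∀ (S : Type) [AddCommGroup S] [Module A S],
      IsSimpleModule A S → ¬ Module.Projective A S)
    (n : ℕ) (V : Type) [AddCommGroup V] [Module A V] [Nontrivial V]
    (hV : Module.IsTorsionBySet A V (Ring.jacobson A)) : ¬ HasProjResolutionLE A n V := by
  intro h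
  have := hV.isSemisimpleModule_of_jacobson
  obtain ⟨T, hT, hTn⟩ := h.exists_isSimpleModule
  cases n with
  | zero => exact hnsp T hT hTn.projective
  | succ n =>
    obtain ⟨W, _, hW, hWn⟩ :=
      hrad.exists_isTorsionBySet_jacobson_hasProjResolutionLE (hnsp T hT) hTn
    exact not_hasProjResolutionLE hrad hnsp n W hW hWn

end RadicalSquareZero

/-- Let `A` be an artin algebra with radical square zero having no simple
projective modules (e.g. `A` cyclic-like).  Then every simple `A`-module has infinite
projective dimension. -/
theorem simple_infinite_projDim_of_radicalSquareZero
    (R A : Type) [CommRing R] [IsArtinianRing R] [Ring A] [Algebra R A]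
    [Module.Finite R A] (hrad : RadicalSquareZero A)
    (hnsp : ∀ (S : Type) [AddCommGroup S] [Module A S],
      IsSimpleModule A S → ¬ Module.Projective A S)
    (S : ModuleCat.{0} A) (hS : IsSimpleModule A S) :
    ¬ HasFiniteProjectiveDimension A S := by
  have : IsArtinianRing A := .of_finite R A
  have := IsSimpleModule.nontrivial A S
  rw [hasFiniteProjectiveDimension_iff]
  rintro ⟨n, hn⟩
  exact hrad.not_hasProjResolutionLE hnsp n S
    ((Module.isTorsionBySet_iff_subset_annihilator A S).2
      (IsSemisimpleModule.jacobson_le_annihilator A S)) hn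
end

section
/- Let A be an artin algebra with radical square zero and no simple projective modules. Then for each i ≥ 0, the algebra homomorphism End_{A/r}(r^{⊗i}) → End_{A/r}(r^{⊗(i+1)}) induced by applying the functor r ⊗_{A/r} − is injective. -/
/-
Since `β x (f m) = (id_r ⊗ f) (β x m)`, it suffices to show that `β x n = 0` for all `x ∈ r`
forces `n = 0`. Suppose `n ≠ 0`. Being killed by `r`, the module `r^{⊗ i}` is semisimple, so `n`
survives in a simple quotient `S`. Splitting the surjection `A/r → S`, `ā ↦ a n̄`, gives `e ∈ A`
with `e n̄ = n̄` and `ann(n̄) e ⊆ r`; if `r e = 0`, then `a n̄ ↦ a e²` splits `A → S` and `S` is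
projective. Hence `x e ≠ 0` for some `x ∈ r`. Because `r² = 0`, the map sending `(x, m)` to `x`
times any lift of the image of `m` in `A/r` is a well-defined balanced map on `r × r^{⊗ i}`, with
value `x e` at `(x, n)`; by the universal property it factors through `β`, so `β x n ≠ 0`.
-/

open CategoryTheory

/-- A realization of the tower of tensor powers `r^{⊗ i}` of the radical `r` of `A`
over `A/r`.  `T i` realizes `r^{⊗ i}` (an `A/r`-module, viewed as an `A`-module killed
by `r`), `β i : r → T i → T (i+1)` realizes the canonical balanced map
`r × r^{⊗ i} → r^{⊗ (i+1)}`, and `stepH a b` realizes the map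
`Hom_{A/r}(r^{⊗ a}, r^{⊗ b}) → Hom_{A/r}(r^{⊗ (a+1)}, r^{⊗ (b+1)})`, `f ↦ id_r ⊗ f`,
induced by the functor `r ⊗_{A/r} −`. -/
structure RadTensorTower (A : Type) [Ring A] where
  T : ℕ → ModuleCat.{0} A
  radkill : ∀ i, ∀ a ∈ ringRadical A, ∀ x : T i, a • x = 0
  iso0 : Nonempty ((A ⧸ ringRadical A) ≃ₗ[A] T 0)
  β : ∀ i, ringRadical A → T i → T (i + 1)
  β_add_left : ∀ i x y m, β i (x + y) m = β i x m + β i y m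
  β_add_right : ∀ i x m m', β i x (m + m') = β i x m + β i x m'
  β_balanced : ∀ i (x : A) (hx : x ∈ ringRadical A) (a : A)
      (hxa : x * a ∈ ringRadical A) (m : T i),
      β i ⟨x * a, hxa⟩ m = β i ⟨x, hx⟩ (a • m)
  β_smul : ∀ i (a : A) (x : ringRadical A) (m : T i), β i (a • x) m = a • β i x m
  β_universal : ∀ i (U : Type) [AddCommGroup U] (γ : ringRadical A → T i → U),
      (∀ x y m, γ (x + y) m = γ x m + γ y m) →
      (∀ x m m', γ x (m + m') = γ x m + γ x m') →
      (∀ (x : A) (hx : x ∈ ringRadical A) (a : A) (hxa : x * a ∈ ringRadical A) m,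
        γ ⟨x * a, hxa⟩ m = γ ⟨x, hx⟩ (a • m)) →
      ∃! h : T (i + 1) →+ U, ∀ x m, h (β i x m) = γ x m
  stepH : ∀ a b, (T a →ₗ[A] T b) → (T (a + 1) →ₗ[A] T (b + 1))
  stepH_spec : ∀ a b (f : T a →ₗ[A] T b) (x : ringRadical A) (m : T a),
      stepH a b f (β a x m) = β b x (f m)
  stepH_add : ∀ a b (f g : T a →ₗ[A] T b), stepH a b (f + g) = stepH a b f + stepH a b g
  stepH_id : ∀ a, stepH a a LinearMap.id = LinearMap.id
  stepH_comp : ∀ a b c (f : T a →ₗ[A] T b) (g : T b →ₗ[A] T c),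
      stepH a c (g ∘ₗ f) = stepH b c g ∘ₗ stepH a b f

namespace RadTensorTower

variable {A : Type} [Ring A] (D : RadTensorTower A)

/-- Iteration of the maps `f ↦ id_r ⊗ f`. -/
def stepHIter (a b : ℕ) : ∀ m : ℕ, (D.T a →ₗ[A] D.T b) → (D.T (a + m) →ₗ[A] D.T (b + m))
  | 0, f => f
  | m + 1, f => D.stepH (a + m) (b + m) (stepHIter a b m f)

/-- The transition ring homomorphism
`End_{A/r}(r^{⊗ i}) → End_{A/r}(r^{⊗ (i+1)})`, `f ↦ id_r ⊗ f`. -/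
def stepEnd (i : ℕ) : Module.End A (D.T i) →+* Module.End A (D.T i.succ) where
  toFun f := D.stepH i i f
  map_one' := D.stepH_id i
  map_mul' f g := D.stepH_comp i i i g f
  map_zero' := by
    have h := D.stepH_add i i 0 0
    rw [add_zero] at h
    exact left_eq_add.mp h
  map_add' f g := D.stepH_add i i f g

end RadTensorTower

section SemilocalRing

variable {A : Type*} [Ring A] [IsSemisimpleRing (A ⧸ Ring.jacobson A)]
  {M : Type*} [AddCommGroup M] [Module A M]

theorem isSemisimpleModule_of_isTorsionBySet_jacobson
    (hM : Module.IsTorsionBySet A M (Ring.jacobson A)) : IsSemisimpleModule A M :=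
  letI := hM.module
  hM.isSemisimpleModule_iff.mp inferInstance

theorem isSemisimpleModule_quotient_jacobson : IsSemisimpleModule A (A ⧸ Ring.jacobson A) :=
  isSemisimpleModule_of_isTorsionBySet_jacobson fun b a ↦ by
    obtain ⟨b, rfl⟩ := Submodule.Quotient.mk_surjective _ b
    rw [← Submodule.Quotient.mk_smul, Submodule.Quotient.mk_eq_zero, smul_eq_mul]
    exact Ideal.mul_mem_right b _ a.2

end SemilocalRing

theorem IsSemisimpleModule.exists_isCoatom_not_mem {A M : Type*} [Ring A] [AddCommGroup M]
    [Module A M] [IsSemisimpleModule A M] {n : M} (hn : n ≠ 0) :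
    ∃ W : Submodule A M, IsCoatom W ∧ n ∉ W := by
  by_contra! h
  apply hn
  rw [← Submodule.mem_bot A, ← IsSemisimpleModule.jacobson_eq_bot A M]
  exact Submodule.mem_sInf.mpr h

theorem Module.Projective.of_toSpanSingleton_surjective {A S : Type*} [Ring A]
    [AddCommGroup S] [Module A S] {s : S}
    (hs : Function.Surjective (LinearMap.toSpanSingleton A S s)) {e : A} (he : e • s = s)
    (hann : ∀ a : A, a • s = 0 → a * e = 0) : Module.Projective A S := by
  set φ := LinearMap.toSpanSingleton A S s
  have hker : LinearMap.ker φ ≤ LinearMap.ker (LinearMap.toSpanSingleton A A e) := hann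
  refine .of_split ((LinearMap.ker φ).liftQ _ hker ∘ₗ (φ.quotKerEquivOfSurjective hs).symm) φ ?_
  ext t
  obtain ⟨a, rfl⟩ := hs t
  have hmk : (φ.quotKerEquivOfSurjective hs).symm (φ a) = Submodule.Quotient.mk a := by
    rw [LinearEquiv.symm_apply_eq, LinearMap.quotKerEquivOfSurjective_apply_mk]
  rw [LinearMap.comp_apply, LinearMap.comp_apply, LinearEquiv.coe_coe, hmk, Submodule.liftQ_apply]
  simp [φ, mul_smul, he]

theorem exists_mul_ne_zero_of_not_projective {A S : Type*} [Ring A]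
    [IsSemisimpleRing (A ⧸ Ring.jacobson A)] [AddCommGroup S] [Module A S] [IsSimpleModule A S]
    (hS : ¬ Module.Projective A S) {s : S} (hs : s ≠ 0) :
    ∃ (τ : S →ₗ[A] A ⧸ Ring.jacobson A) (e : A), Ideal.Quotient.mk _ e = τ s ∧
      ∃ x ∈ Ring.jacobson A, x * e ≠ 0 := by
  set J := Ring.jacobson A
  have hJs : J ≤ LinearMap.ker (LinearMap.toSpanSingleton A S s) := fun a ha ↦
    Module.mem_annihilator.mp (IsSemisimpleModule.jacobson_le_annihilator A S ha) s
  set φ := J.liftQ _ hJs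
  have hφ : Function.Surjective φ := by
    rw [← LinearMap.range_eq_top, Submodule.range_liftQ, LinearMap.range_eq_top]
    exact IsSimpleModule.toSpanSingleton_surjective A hs
  have := isSemisimpleModule_quotient_jacobson (A := A)
  obtain ⟨τ, hτ⟩ := IsSemisimpleModule.lifting_property φ hφ LinearMap.id
  obtain ⟨e, he⟩ := Ideal.Quotient.mk_surjective (τ s)
  refine ⟨τ, e, he, ?_⟩
  by_contra! hJe
  have hes : e • s = s := by
    have := LinearMap.congr_fun hτ s
    rw [LinearMap.comp_apply, ← he] at this
    exact this
  refine hS (.of_toSpanSingleton_surjective (IsSimpleModule.toSpanSingleton_surjective A hs)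
    (e := e * e) (by rw [mul_smul, hes, hes]) fun a ha ↦ ?_)
  have hae : a * e ∈ J := by
    have hmk : Ideal.Quotient.mk J (a * e) = τ (a • s) := by rw [map_smul, ← he]; rfl
    rw [← Ideal.Quotient.eq_zero_iff_mem, hmk, ha, map_zero]
  rw [← mul_assoc, hJe _ hae]

theorem ringRadical_eq_jacobson (A : Type) [Ring A] : ringRadical A = Ring.jacobson A :=
  Ideal.jacobson_bot

theorem RadicalSquareZero.mul_eq_mul_of_mk_eq {A : Type} [Ring A] (hrad : RadicalSquareZero A)
    {x : A} (hx : x ∈ Ring.jacobson A) {a b : A}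
    (hab : Ideal.Quotient.mk (Ring.jacobson A) a = Ideal.Quotient.mk _ b) : x * a = x * b := by
  have hJ := ringRadical_eq_jacobson A
  rw [← sub_eq_zero, ← mul_sub]
  exact hrad x (hJ.ge hx) _ (hJ.ge (Ideal.Quotient.eq.mp hab))

namespace RadTensorTower

variable {A : Type} [Ring A] (D : RadTensorTower A)

theorem mul_eq_zero_of_β_eq_zero (hrad : RadicalSquareZero A) {i : ℕ}
    (g : D.T i →ₗ[A] A ⧸ Ring.jacobson A) {n : D.T i} (hn : ∀ x, D.β i x n = 0) {e : A}
    (he : Ideal.Quotient.mk _ e = g n) {x : A} (hx : x ∈ Ring.jacobson A) : x * e = 0 := by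
  have hJ := ringRadical_eq_jacobson A
  obtain ⟨lift, hlift⟩ := (Ideal.Quotient.mk_surjective (I := Ring.jacobson A)).hasRightInverse
  have hmul {x : A} (hx : x ∈ Ring.jacobson A) {a : A} {u : A ⧸ Ring.jacobson A}
      (ha : Ideal.Quotient.mk _ a = u) : x * lift u = x * a :=
    hrad.mul_eq_mul_of_mk_eq hx ((hlift u).trans ha.symm)
  obtain ⟨h, hh, -⟩ := D.β_universal i A (fun x m ↦ (x : A) * lift (g m))
    (fun x y m ↦ by simp only [Submodule.coe_add, add_mul])
    (fun x m m' ↦ by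
      rw [← mul_add, map_add]
      exact hmul (hJ.le x.2) (by rw [map_add, hlift, hlift]))
    (fun x hx a hxa m ↦ by
      rw [mul_assoc, map_smul]
      exact (hmul (hJ.le hx) (by rw [map_mul, hlift, ← smul_eq_mul]; rfl)).symm)
  rw [← hmul hx he, ← hh ⟨x, hJ.ge hx⟩ n, hn, map_zero]

theorem eq_zero_of_β_eq_zero [IsSemisimpleRing (A ⧸ Ring.jacobson A)]
    (hrad : RadicalSquareZero A)
    (hnsp : ∀ (S : Type) [AddCommGroup S] [Module A S],
      IsSimpleModule A S → ¬ Module.Projective A S)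
    {i : ℕ} {n : D.T i} (hn : ∀ x, D.β i x n = 0) : n = 0 := by
  by_contra hn0
  have : IsSemisimpleModule A (D.T i) := isSemisimpleModule_of_isTorsionBySet_jacobson
    fun m a ↦ D.radkill i a ((ringRadical_eq_jacobson A).ge a.2) m
  obtain ⟨W, hW, hnW⟩ := IsSemisimpleModule.exists_isCoatom_not_mem (A := A) hn0
  have : IsSimpleModule A (D.T i ⧸ W) := isSimpleModule_iff_isCoatom.mpr hW
  obtain ⟨τ, e, he, x, hx, hxe⟩ := exists_mul_ne_zero_of_not_projective (hnsp _ this)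
    (s := W.mkQ n) (by simpa using hnW)
  exact hxe (D.mul_eq_zero_of_β_eq_zero hrad (τ ∘ₗ W.mkQ) hn he hx)

end RadTensorTower

/-- Let `A` be an artin algebra with radical square zero and no simple
projective modules.  Then for each `i ≥ 0` the algebra homomorphism
`End_{A/r}(r^{⊗ i}) → End_{A/r}(r^{⊗ (i+1)})` induced by the functor `r ⊗_{A/r} −`
(sending `f` to `id_r ⊗ f`) is injective. -/
theorem stepEnd_injective
    (R A : Type) [CommRing R] [IsArtinianRing R] [Ring A] [Algebra R A]
    [Module.Finite R A] (hrad : RadicalSquareZero A)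
    (hnsp : ∀ (S : Type) [AddCommGroup S] [Module A S],
      IsSimpleModule A S → ¬ Module.Projective A S)
    (D : RadTensorTower A) (i : ℕ) :
    Function.Injective (D.stepEnd i) := by
  have : IsArtinianRing A := IsArtinianRing.of_finite R A
  refine (injective_iff_map_eq_zero _).mpr fun f hf ↦ LinearMap.ext fun m ↦
    D.eq_zero_of_β_eq_zero hrad hnsp fun x ↦ ?_
  have hstep : D.stepH i i f = 0 := hf
  rw [← D.stepH_spec, hstep, LinearMap.zero_apply]
end
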